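/- arXiv:0904.2342 — 2 statements merged into one kernel-verified Lean document; each statement's English description precedes it below -/
import Mathlib

section
/- Let X be a real Banach space, J : X → X nonexpansive, and Φ(λ,x) = λ J(((1−λ)/λ) x) for λ ∈ (0,1]. Assume hypothesis (H): there is a constant C ≥ 0 with ‖Φ(λ,x) − Φ(μ,x)‖ ≤ |λ − μ|(C + ‖x‖) for all x ∈ X and λ, μ ∈ (0,1]. Let λ̄, μ̄ : [0,∞) → (0,1] be continuous, and let u, v : [0,∞) → X be differentiable with u'(t) = Φ(λ̄(t), u(t)) − u(t) and v'(t) = Φ(μ̄(t), v(t)) − v(t) for all t ≥ 0. Then for every t ≥ 0, ‖u(t) − v(t)‖ ≤ e^{−∫_0^t μ̄(s) ds} ( ‖u(0) − v(0)‖ + ∫_0^t (C + ‖u(s)‖) |λ̄(s) − μ̄(s)| e^{∫_0^s μ̄(i) di} ds ). -/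
/-!
Put `w = u - v`. By (H) and the `(1 - μ)`-contraction of `Φ(μ, ·)`, the vector
`w + w' = Φ(λ̄, u) - Φ(μ̄, v)` has norm at most `q + (1 - μ̄) ‖w‖` with
`q = (C + ‖u‖) |λ̄ - μ̄|`. By convexity of the norm, the right Dini derivative of `‖w‖` is at most
`‖w + w'‖ - ‖w‖ ≤ q - μ̄ ‖w‖`, and the integrating factor `exp (∫ μ̄)` turns this into the bound.
-/

open Set Filter Topology

theorem ContinuousOn.continuousOn_integral_Icc {g : ℝ → ℝ} {a b : ℝ}
    (hg : ContinuousOn g (Icc a b)) : ContinuousOn (fun t => ∫ s in a..t, g s) (Icc a b) := by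
  rcases le_or_gt a b with hab | hba
  · have := intervalIntegral.continuousOn_primitive_interval (μ := MeasureTheory.volume)
      (uIcc_of_le hab ▸ hg.integrableOn_Icc)
    rwa [uIcc_of_le hab] at this
  · simp [Icc_eq_empty_of_lt hba]

theorem ContinuousOn.hasDerivWithinAt_integral_Ici {g : ℝ → ℝ} {a b x : ℝ}
    (hg : ContinuousOn g (Icc a b)) (hx : x ∈ Ico a b) :
    HasDerivWithinAt (fun t => ∫ s in a..t, g s) (g x) (Ici x) x := by
  have hIcc : Icc a b ∈ 𝓝[>] x :=
    mem_of_superset (Ioc_mem_nhdsGT_of_mem ⟨le_rfl, hx.2⟩) fun y hy => ⟨hx.1.trans hy.1.le, hy.2⟩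
  refine intervalIntegral.integral_hasDerivWithinAt_right ?_ ?_ ?_
  · exact (hg.mono (uIcc_of_le hx.1 ▸ Icc_subset_Icc le_rfl hx.2.le)).intervalIntegrable
  · exact ⟨Icc a b, hIcc, hg.aestronglyMeasurable measurableSet_Icc⟩
  · exact (hg x (Ico_subset_Icc_self hx)).mono_of_mem_nhdsWithin hIcc

section NormComparison

variable {E : Type*} [NormedAddCommGroup E] [NormedSpace ℝ E]

theorem slope_norm_le_norm_add_sub_norm_add (f : ℝ → E) (v : E) {x z : ℝ} (hxz : x < z)
    (hzx : z ≤ x + 1) :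
    slope (‖f ·‖) x z ≤ ‖f x + v‖ - ‖f x‖ + ‖slope f x z - v‖ := by
  set h := z - x
  have hh : 0 < h := sub_pos.2 hxz
  have hfz : f z = (1 - h) • f x + h • (f x + v) + h • (slope f x z - v) := by
    rw [← sub_smul_slope_vadd f x z, vadd_eq_add]
    module
  have hnorm : ‖f z‖ ≤ (1 - h) * ‖f x‖ + h * ‖f x + v‖ + h * ‖slope f x z - v‖ := by
    rw [hfz]
    refine norm_add₃_le.trans ?_
    rw [norm_smul, norm_smul, norm_smul, Real.norm_of_nonneg (by linarith),
      Real.norm_of_nonneg hh.le]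
  rw [slope_def_field, div_le_iff₀ hh]
  linarith

/-- Sharper than `HasDerivWithinAt.liminf_right_slope_norm_le` when `f'` points towards `0`. -/
theorem HasDerivWithinAt.limsup_right_slope_norm_le_norm_add_sub_norm {f : ℝ → E} {f' : E}
    {x r : ℝ} (hf : HasDerivWithinAt f f' (Ici x) x) (hr : ‖f x + f'‖ - ‖f x‖ < r) :
    ∀ᶠ z in 𝓝[>] x, slope (‖f ·‖) x z < r := by
  have hslope : Tendsto (fun z => ‖f x + f'‖ - ‖f x‖ + ‖slope f x z - f'‖) (𝓝[>] x)
      (𝓝 (‖f x + f'‖ - ‖f x‖ + ‖f' - f'‖)) :=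
    (((hasDerivWithinAt_iff_tendsto_slope' self_notMem_Ioi).1 hf.Ioi_of_Ici).sub_const f').norm
      |>.const_add _
  rw [sub_self, norm_zero, add_zero] at hslope
  filter_upwards [hslope.eventually (gt_mem_nhds hr),
    Ioc_mem_nhdsGT_of_mem ⟨le_rfl, lt_add_one x⟩] with z hz hzx
  exact (slope_norm_le_norm_add_sub_norm_add f f' hzx.1 hzx.2).trans_lt hz

theorem norm_le_exp_neg_integral_mul_of_norm_add_deriv_right_le
    {f f' : ℝ → E} {p q : ℝ → ℝ} {a b : ℝ}
    (hab : a ≤ b) (hf : ContinuousOn f (Icc a b))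
    (hf' : ∀ x ∈ Ico a b, HasDerivWithinAt f (f' x) (Ici x) x)
    (hp : ContinuousOn p (Icc a b)) (hp₀ : ∀ x ∈ Ico a b, 0 ≤ p x) (hq : ContinuousOn q (Icc a b))
    (hbound : ∀ x ∈ Ico a b, ‖f x + f' x‖ ≤ q x + (1 - p x) * ‖f x‖) :
    ‖f b‖ ≤ Real.exp (-∫ s in a..b, p s) *
      (‖f a‖ + ∫ s in a..b, q s * Real.exp (∫ r in a..s, p r)) := by
  set P : ℝ → ℝ := fun t => ∫ s in a..t, p s
  have hPc : ContinuousOn (fun t => Real.exp (P t)) (Icc a b) :=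
    Real.continuous_exp.comp_continuousOn hp.continuousOn_integral_Icc
  have hg : ContinuousOn (fun s => q s * Real.exp (P s)) (Icc a b) := hq.mul hPc
  -- the factor `exp P` absorbs the term `-p ‖f‖`, leaving a slope bound independent of `f`
  have hW : ∀ t ∈ Icc a b,
      ‖Real.exp (P t) • f t‖ ≤ ‖f a‖ + ∫ s in a..t, q s * Real.exp (P s) := by
    refine image_le_of_liminf_slope_right_le_deriv_boundary (hPc.smul hf).norm ?_
      (continuousOn_const.add hg.continuousOn_integral_Icc)
      (fun x hx => (hg.hasDerivWithinAt_integral_Ici hx).const_add _) ?_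
    · simp [P]
    · intro x hx r hr
      have hPx : HasDerivWithinAt P (p x) (Ici x) x := hp.hasDerivWithinAt_integral_Ici hx
      refine ((hPx.exp.smul (hf' x hx)).limsup_right_slope_norm_le_norm_add_sub_norm
        (lt_of_le_of_lt ?_ hr)).frequently
      set e := Real.exp (P x)
      have he : 0 < e := Real.exp_pos _
      calc ‖e • f x + (e • f' x + (e * p x) • f x)‖ - ‖e • f x‖
          = e * ‖f x + f' x + p x • f x‖ - e * ‖f x‖ := by
            rw [← norm_smul_of_nonneg he.le, ← norm_smul_of_nonneg he.le]
            congr 2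
            module
        _ ≤ e * (q x + (1 - p x) * ‖f x‖ + p x * ‖f x‖) - e * ‖f x‖ := by
            gcongr
            refine (norm_add_le _ _).trans (add_le_add (hbound x hx) ?_)
            rw [norm_smul, Real.norm_of_nonneg (hp₀ x hx)]
        _ = q x * e := by ring
  have := hW b (right_mem_Icc.2 hab)
  rw [norm_smul, Real.norm_of_nonneg (Real.exp_pos _).le] at this
  rw [Real.exp_neg, ← div_eq_inv_mul, le_div_iff₀ (Real.exp_pos _), mul_comm]
  exact this

end NormComparison

section Resolvent

variable {X : Type*} [NormedAddCommGroup X] [NormedSpace ℝ X]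

noncomputable def Φ (J : X → X) (lam : ℝ) (x : X) : X := lam • J (((1 - lam) / lam) • x)

theorem norm_Φ_sub_Φ_le_one_sub_mul {J : X → X} (hJ : ∀ x y : X, ‖J x - J y‖ ≤ ‖x - y‖) {mu : ℝ}
    (hmu : mu ∈ Ioc (0 : ℝ) 1) (x y : X) : ‖Φ J mu x - Φ J mu y‖ ≤ (1 - mu) * ‖x - y‖ := by
  have hc : 0 ≤ (1 - mu) / mu := div_nonneg (sub_nonneg.2 hmu.2) hmu.1.le
  calc ‖Φ J mu x - Φ J mu y‖
      = mu * ‖J (((1 - mu) / mu) • x) - J (((1 - mu) / mu) • y)‖ := by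
        rw [Φ, Φ, ← smul_sub, norm_smul, Real.norm_of_nonneg hmu.1.le]
    _ ≤ mu * ((1 - mu) / mu * ‖x - y‖) := by
        refine mul_le_mul_of_nonneg_left ?_ hmu.1.le
        simpa only [← smul_sub, norm_smul, Real.norm_of_nonneg hc] using
          hJ (((1 - mu) / mu) • x) (((1 - mu) / mu) • y)
    _ = (1 - mu) * ‖x - y‖ := by rw [← mul_assoc, mul_div_cancel₀ _ hmu.1.ne']

theorem norm_Φ_sub_Φ_le_add {J : X → X}
    (hJ : ∀ x y : X, ‖J x - J y‖ ≤ ‖x - y‖) {C : ℝ}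
    (hH : ∀ x : X, ∀ lam ∈ Ioc (0 : ℝ) 1, ∀ mu ∈ Ioc (0 : ℝ) 1,
      ‖Φ J lam x - Φ J mu x‖ ≤ |lam - mu| * (C + ‖x‖))
    {lam mu : ℝ} (hlam : lam ∈ Ioc (0 : ℝ) 1) (hmu : mu ∈ Ioc (0 : ℝ) 1) (x y : X) :
    ‖Φ J lam x - Φ J mu y‖ ≤ (C + ‖x‖) * |lam - mu| + (1 - mu) * ‖x - y‖ := by
  calc ‖Φ J lam x - Φ J mu y‖ ≤ ‖Φ J lam x - Φ J mu x‖ + ‖Φ J mu x - Φ J mu y‖ :=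
        norm_sub_le_norm_sub_add_norm_sub _ _ _
    _ ≤ |lam - mu| * (C + ‖x‖) + (1 - mu) * ‖x - y‖ :=
        add_le_add (hH x lam hlam mu hmu) (norm_Φ_sub_Φ_le_one_sub_mul hJ hmu x y)
    _ = (C + ‖x‖) * |lam - mu| + (1 - mu) * ‖x - y‖ := by ring

end Resolvent

open intervalIntegral

theorem two_parametrizations_comparison_general
    {X : Type*} [NormedAddCommGroup X] [NormedSpace ℝ X]
    (J : X → X) (hJ : ∀ x y : X, ‖J x - J y‖ ≤ ‖x - y‖)
    (C : ℝ)
    (hH : ∀ (x : X), ∀ lam ∈ Set.Ioc (0 : ℝ) 1, ∀ mu ∈ Set.Ioc (0 : ℝ) 1,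
      ‖lam • J (((1 - lam) / lam) • x) - mu • J (((1 - mu) / mu) • x)‖ ≤
        |lam - mu| * (C + ‖x‖))
    (lamb mub : ℝ → ℝ)
    (hlamb : ∀ t ≥ (0 : ℝ), lamb t ∈ Set.Ioc (0 : ℝ) 1)
    (hmub : ∀ t ≥ (0 : ℝ), mub t ∈ Set.Ioc (0 : ℝ) 1)
    (hlambc : ContinuousOn lamb (Set.Ici (0 : ℝ)))
    (hmubc : ContinuousOn mub (Set.Ici (0 : ℝ)))
    (u v : ℝ → X)
    (hu : ∀ t ≥ (0 : ℝ),
      HasDerivAt u (lamb t • J (((1 - lamb t) / lamb t) • u t) - u t) t)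
    (hv : ∀ t ≥ (0 : ℝ),
      HasDerivAt v (mub t • J (((1 - mub t) / mub t) • v t) - v t) t) :
    ∀ t ≥ (0 : ℝ),
      ‖u t - v t‖ ≤ Real.exp (-∫ s in (0 : ℝ)..t, mub s) *
        (‖u 0 - v 0‖ + ∫ s in (0 : ℝ)..t,
          (C + ‖u s‖) * |lamb s - mub s| * Real.exp (∫ i in (0 : ℝ)..s, mub i)) := by
  intro T hT
  have huv : ∀ t ≥ (0 : ℝ), HasDerivAt (fun s => u s - v s)
      ((Φ J (lamb t) (u t) - Φ J (mub t) (v t)) - (u t - v t)) t := fun t ht => by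
    have h := (hu t ht).sub (hv t ht)
    rw [sub_sub_sub_comm] at h
    exact h
  have hIcc : Icc 0 T ⊆ Ici 0 := Icc_subset_Ici_self
  have hu_cont : ContinuousOn u (Icc 0 T) :=
    fun t ht => (hu t ht.1).continuousAt.continuousWithinAt
  refine norm_le_exp_neg_integral_mul_of_norm_add_deriv_right_le hT
    (fun t ht => (huv t ht.1).continuousAt.continuousWithinAt)
    (fun t ht => (huv t ht.1).hasDerivWithinAt) (hmubc.mono hIcc) (fun t ht => (hmub t ht.1).1.le)
    ((continuousOn_const.add hu_cont.norm).mul ((hlambc.sub hmubc).abs.mono hIcc)) ?_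
  intro t ht
  rw [add_sub_cancel]
  exact norm_Φ_sub_Φ_le_add hJ hH (hlamb t ht.1) (hmub t ht.1) _ _

/-- under hypothesis (H), for continuous parametrizations
`λ̄, μ̄ : [0,∞) → (0,1]` and solutions `u, v` of the corresponding evolution
equations `u' = Φ(λ̄(t),u) - u`, `v' = Φ(μ̄(t),v) - v`, where
`Φ(λ,x) = λ J(((1-λ)/λ)x)`, one has
`‖u(t) - v(t)‖ ≤ e^{-∫_0^t μ̄} (‖u(0) - v(0)‖ + ∫_0^t (C + ‖u(s)‖)|λ̄(s) - μ̄(s)| e^{∫_0^s μ̄} ds)`. -/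
theorem two_parametrizations_comparison
    {X : Type*} [NormedAddCommGroup X] [NormedSpace ℝ X] [CompleteSpace X]
    (J : X → X) (hJ : ∀ x y : X, ‖J x - J y‖ ≤ ‖x - y‖)
    (C : ℝ) (hC : 0 ≤ C)
    (hH : ∀ (x : X), ∀ lam ∈ Set.Ioc (0 : ℝ) 1, ∀ mu ∈ Set.Ioc (0 : ℝ) 1,
      ‖lam • J (((1 - lam) / lam) • x) - mu • J (((1 - mu) / mu) • x)‖ ≤
        |lam - mu| * (C + ‖x‖))
    (lamb mub : ℝ → ℝ)
    (hlamb : ∀ t ≥ (0 : ℝ), lamb t ∈ Set.Ioc (0 : ℝ) 1)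
    (hmub : ∀ t ≥ (0 : ℝ), mub t ∈ Set.Ioc (0 : ℝ) 1)
    (hlambc : ContinuousOn lamb (Set.Ici (0 : ℝ)))
    (hmubc : ContinuousOn mub (Set.Ici (0 : ℝ)))
    (u v : ℝ → X)
    (hu : ∀ t ≥ (0 : ℝ),
      HasDerivAt u (lamb t • J (((1 - lamb t) / lamb t) • u t) - u t) t)
    (hv : ∀ t ≥ (0 : ℝ),
      HasDerivAt v (mub t • J (((1 - mub t) / mub t) • v t) - v t) t) :
    ∀ t ≥ (0 : ℝ),
      ‖u t - v t‖ ≤ Real.exp (-∫ s in (0 : ℝ)..t, mub s) *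
        (‖u 0 - v 0‖ + ∫ s in (0 : ℝ)..t,
          (C + ‖u s‖) * |lamb s - mub s| * Real.exp (∫ i in (0 : ℝ)..s, mub i)) :=
  two_parametrizations_comparison_general J hJ C hH lamb mub hlamb hmub hlambc hmubc u v hu hv
end

section
/- Let X be a real Banach space, J : X → X nonexpansive, and Φ(λ,x) = λ J(((1−λ)/λ) x) for λ ∈ (0,1], with v_λ the unique fixed point of Φ(λ,·). Assume hypothesis (H): there is a constant C ≥ 0 with ‖Φ(λ,x) − Φ(μ,x)‖ ≤ |λ − μ|(C + ‖x‖) for all x ∈ X and λ, μ ∈ (0,1]. Let (λ_n)_{n≥1} be a sequence in (0,1] such that λ_n → 0 and 1/λ_n − 1/λ_{n+1} → 0 as n → ∞, and let (w_n) be defined by w_n = Φ(λ_n, w_{n−1}) with arbitrary w_0 ∈ X. Then ‖v_{λ_n} − w_n‖ → 0 as n → ∞. -/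
/-!
Each `Φ(λ, ·)` is a `(1 - λ)`-contraction, so its fixed point satisfies `‖v_λ‖ ≤ ‖J 0‖`, and
(H) then gives `‖v_λ - v_μ‖ ≤ λ |1/μ - 1/λ| (C + ‖J 0‖)`. Hence `a_n = ‖v_{λ_n} - w_n‖` obeys
`a_{n+1} ≤ (1 - λ_{n+1}) a_n + λ_{n+1} c_n` with `c_n = |1/λ_n - 1/λ_{n+1}| (C + ‖J 0‖) → 0`.
By Cesàro, `1/λ_n = o(n)`, so `∑ λ_n = ∞`, and such a recursion forces `a_n → 0`.
-/

open Filter Finset Topology Function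

theorem le_mul_exp_neg_sum_of_le_one_sub_mul {x t : ℕ → ℝ} (hx : ∀ n, 0 ≤ x n)
    (hrec : ∀ n, x (n + 1) ≤ (1 - t n) * x n) (n : ℕ) :
    x n ≤ x 0 * Real.exp (-∑ i ∈ range n, t i) := by
  induction n with
  | zero => simp
  | succ n ih =>
    calc x (n + 1) ≤ (1 - t n) * x n := hrec n
      _ ≤ Real.exp (-t n) * x n := by
        gcongr
        · exact hx n
        · linarith [Real.add_one_le_exp (-t n)]
      _ ≤ Real.exp (-t n) * (x 0 * Real.exp (-∑ i ∈ range n, t i)) := by gcongr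
      _ = x 0 * Real.exp (-∑ i ∈ range (n + 1), t i) := by
        rw [sum_range_succ, neg_add, Real.exp_add]; ring

theorem tendsto_zero_of_le_one_sub_mul {x t : ℕ → ℝ} (hx : ∀ n, 0 ≤ x n)
    (ht : ∀ n, 0 ≤ t n) (hsum : ¬Summable t)
    (hrec : ∀ᶠ n in atTop, x (n + 1) ≤ (1 - t n) * x n) :
    Tendsto x atTop (𝓝 0) := by
  obtain ⟨N, hN⟩ := eventually_atTop.1 hrec
  rw [← tendsto_add_atTop_iff_nat N]
  have hsum' : Tendsto (fun n => ∑ i ∈ range n, t (i + N)) atTop atTop :=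
    (not_summable_iff_tendsto_nat_atTop_of_nonneg fun i => ht (i + N)).1
      (mt (summable_nat_add_iff N).1 hsum)
  have hexp : Tendsto (fun n => x N * Real.exp (-∑ i ∈ range n, t (i + N))) atTop (𝓝 0) := by
    simpa using (Real.tendsto_exp_atBot.comp (tendsto_neg_atTop_atBot.comp hsum')).const_mul (x N)
  refine squeeze_zero (fun n => hx (n + N)) (fun n => ?_) hexp
  simpa using le_mul_exp_neg_sum_of_le_one_sub_mul (x := fun n => x (n + N))
    (fun n => hx (n + N)) (fun n => by simpa [Nat.add_right_comm] using hN (n + N) le_add_self) n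

theorem tendsto_zero_of_le_one_sub_mul_add_mul {a t c : ℕ → ℝ} (ha : ∀ n, 0 ≤ a n)
    (ht : ∀ n, t n ∈ Set.Icc (0 : ℝ) 1) (hsum : ¬Summable t) (hc : Tendsto c atTop (𝓝 0))
    (hrec : ∀ᶠ n in atTop, a (n + 1) ≤ (1 - t n) * a n + t n * c n) :
    Tendsto a atTop (𝓝 0) := by
  refine tendsto_order.2 ⟨fun b hb => .of_forall fun n => hb.trans_le (ha n), fun ε hε => ?_⟩
  -- Once `c n ≤ ε / 2`, the excess of `a n` over `ε / 2` contracts by the factor `1 - t n`.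
  set g := fun n => max (a n - ε / 2) 0
  have hg : Tendsto g atTop (𝓝 0) := by
    refine tendsto_zero_of_le_one_sub_mul (fun n => le_max_right _ _) (fun n => (ht n).1) hsum ?_
    filter_upwards [hrec, hc.eventually (ge_mem_nhds (half_pos hε))] with n hn hcn
    obtain ⟨ht0, ht1⟩ := ht n
    refine max_le ?_ (mul_nonneg (by linarith) (le_max_right _ _))
    nlinarith [le_max_left (a n - ε / 2) 0]
  filter_upwards [hg.eventually (gt_mem_nhds (half_pos hε))] with n hn
  linarith [le_max_left (a n - ε / 2) 0]

theorem tendsto_div_natCast_of_tendsto_sub {u : ℕ → ℝ}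
    (h : Tendsto (fun n => u (n + 1) - u n) atTop (𝓝 0)) :
    Tendsto (fun n => u n / n) atTop (𝓝 0) := by
  have hsplit : (fun n : ℕ => u n / n) =
      fun n : ℕ => (n⁻¹ : ℝ) * ∑ i ∈ range n, (u (i + 1) - u i) + u 0 / n := by
    ext n; rw [sum_range_sub]; ring
  rw [hsplit]
  simpa using h.cesaro.add (tendsto_const_div_atTop_nhds_zero_nat (u 0))

theorem not_summable_of_tendsto_inv_sub_inv {f : ℕ → ℝ} (hf : ∀ᶠ n in atTop, 0 < f n)
    (h : Tendsto (fun n => 1 / f n - 1 / f (n + 1)) atTop (𝓝 0)) : ¬Summable f := by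
  have hlin : Tendsto (fun n => 1 / f n / n) atTop (𝓝 0) :=
    tendsto_div_natCast_of_tendsto_sub (by simpa using h.neg)
  intro hsum
  refine Real.not_summable_one_div_natCast (hsum.of_norm_bounded_eventually_nat ?_)
  filter_upwards [hf, hlin.eventually (gt_mem_nhds one_pos), eventually_gt_atTop 0]
    with n hfn hn hn0
  have hn0' : (0 : ℝ) < n := Nat.cast_pos.2 hn0
  rw [div_lt_one hn0', div_lt_iff₀ hfn] at hn
  rw [Real.norm_eq_abs, abs_of_pos (by positivity), div_le_iff₀ hn0']
  linarith

section Contraction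

variable {E : Type*} [SeminormedAddCommGroup E] {f : E → E} {t : ℝ}

theorem mul_norm_sub_le_norm_sub_apply (hf : ∀ x y, ‖f x - f y‖ ≤ (1 - t) * ‖x - y‖)
    {y : E} (hy : IsFixedPt f y) (x : E) : t * ‖x - y‖ ≤ ‖x - f x‖ := by
  have h := hf x y
  rw [hy.eq] at h
  linarith [norm_sub_le_norm_sub_add_norm_sub x (f x) y]

theorem norm_sub_apply_le_of_isFixedPt (hf : ∀ x y, ‖f x - f y‖ ≤ (1 - t) * ‖x - y‖)
    (ht : t ∈ Set.Icc (0 : ℝ) 1) {y' : E} (hy' : IsFixedPt f y') (x y : E) :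
    ‖y' - f x‖ ≤ (1 - t) * ‖y - x‖ + ‖y' - y‖ := by
  have h := hf y' x
  rw [hy'.eq] at h
  have htri := norm_sub_le_norm_sub_add_norm_sub y' y x
  nlinarith [ht.1, ht.2, norm_nonneg (y' - y)]

end Contraction

section DiscountedMap

variable {X : Type*} [NormedAddCommGroup X] [NormedSpace ℝ X] {J : X → X}

/-- The paper's `Φ(λ, x)`. -/
noncomputable def discountedMap (J : X → X) (lam : ℝ) (x : X) : X :=
  lam • J (((1 - lam) / lam) • x)

theorem norm_discountedMap_sub_le (hJ : ∀ x y, ‖J x - J y‖ ≤ ‖x - y‖) {lam : ℝ}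
    (hlam : lam ∈ Set.Ioc (0 : ℝ) 1) (x y : X) :
    ‖discountedMap J lam x - discountedMap J lam y‖ ≤ (1 - lam) * ‖x - y‖ := by
  obtain ⟨h0, h1⟩ := hlam
  have hc : 0 ≤ (1 - lam) / lam := div_nonneg (by linarith) h0.le
  calc ‖discountedMap J lam x - discountedMap J lam y‖
      = lam * ‖J (((1 - lam) / lam) • x) - J (((1 - lam) / lam) • y)‖ := by
        rw [discountedMap, discountedMap, ← smul_sub, norm_smul, Real.norm_of_nonneg h0.le]
    _ ≤ lam * ‖((1 - lam) / lam) • x - ((1 - lam) / lam) • y‖ := by gcongr; exact hJ _ _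
    _ = (1 - lam) * ‖x - y‖ := by
        rw [← smul_sub, norm_smul, Real.norm_of_nonneg hc]; field_simp

theorem norm_le_of_isFixedPt_discountedMap (hJ : ∀ x y, ‖J x - J y‖ ≤ ‖x - y‖) {lam : ℝ}
    (hlam : lam ∈ Set.Ioc (0 : ℝ) 1) {v : X} (hv : IsFixedPt (discountedMap J lam) v) :
    ‖v‖ ≤ ‖J 0‖ := by
  have h := mul_norm_sub_le_norm_sub_apply (norm_discountedMap_sub_le hJ hlam) hv 0
  rw [zero_sub, norm_neg, zero_sub, norm_neg, discountedMap, smul_zero, norm_smul,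
    Real.norm_of_nonneg hlam.1.le] at h
  exact le_of_mul_le_mul_left h hlam.1

theorem norm_sub_le_of_isFixedPt_discountedMap (hJ : ∀ x y, ‖J x - J y‖ ≤ ‖x - y‖) {C : ℝ}
    (hH : ∀ x : X, ∀ lam ∈ Set.Ioc (0 : ℝ) 1, ∀ mu ∈ Set.Ioc (0 : ℝ) 1,
      ‖discountedMap J lam x - discountedMap J mu x‖ ≤ |lam - mu| * (C + ‖x‖))
    {lam mu : ℝ} (hlam : lam ∈ Set.Ioc (0 : ℝ) 1) (hmu : mu ∈ Set.Ioc (0 : ℝ) 1) {v w : X}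
    (hv : IsFixedPt (discountedMap J lam) v) (hw : IsFixedPt (discountedMap J mu) w) :
    ‖v - w‖ ≤ lam * (|1 / mu - 1 / lam| * (C + ‖J 0‖)) := by
  have h := mul_norm_sub_le_norm_sub_apply (norm_discountedMap_sub_le hJ hmu) hw v
  nth_rw 2 [← hv.eq] at h
  have hvJ := norm_le_of_isFixedPt_discountedMap hJ hlam hv
  have hlm : |lam - mu| = mu * (lam * |1 / mu - 1 / lam|) := by
    have hlam0 := hlam.1; have hmu0 := hmu.1
    rw [show 1 / mu - 1 / lam = (lam - mu) / (lam * mu) by field_simp, abs_div,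
      abs_of_pos (mul_pos hlam0 hmu0)]
    field_simp
  refine le_of_mul_le_mul_left ?_ hmu.1
  calc mu * ‖v - w‖ ≤ |lam - mu| * (C + ‖v‖) := h.trans (hH v lam hlam mu hmu)
    _ ≤ |lam - mu| * (C + ‖J 0‖) := by gcongr
    _ = mu * (lam * (|1 / mu - 1 / lam| * (C + ‖J 0‖))) := by rw [hlm]; ring

end DiscountedMap

theorem discrete_slow_scheme_tracks_vlambda_general
    {X : Type*} [NormedAddCommGroup X] [NormedSpace ℝ X]
    (J : X → X) (hJ : ∀ x y : X, ‖J x - J y‖ ≤ ‖x - y‖)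
    (v : ℝ → X)
    (hv : ∀ lam ∈ Set.Ioc (0 : ℝ) 1,
      lam • J (((1 - lam) / lam) • v lam) = v lam)
    (C : ℝ)
    (hH : ∀ (x : X), ∀ lam ∈ Set.Ioc (0 : ℝ) 1, ∀ mu ∈ Set.Ioc (0 : ℝ) 1,
      ‖lam • J (((1 - lam) / lam) • x) - mu • J (((1 - mu) / mu) • x)‖ ≤
        |lam - mu| * (C + ‖x‖))
    (lam : ℕ → ℝ)
    (hlam : ∀ n : ℕ, 1 ≤ n → lam n ∈ Set.Ioc (0 : ℝ) 1)
    (hslow : Tendsto (fun n : ℕ => 1 / lam n - 1 / lam (n + 1)) atTop (nhds 0))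
    (w : ℕ → X)
    (hw : ∀ n : ℕ, 1 ≤ n →
      w n = lam n • J (((1 - lam n) / lam n) • w (n - 1))) :
    Tendsto (fun n : ℕ => ‖v (lam n) - w n‖) atTop (nhds 0) := by
  have hlam' (n : ℕ) : lam (n + 1) ∈ Set.Ioc (0 : ℝ) 1 := hlam (n + 1) le_add_self
  have hvn (n : ℕ) (hn : 1 ≤ n) : IsFixedPt (discountedMap J (lam n)) (v (lam n)) :=
    hv _ (hlam n hn)
  have hsum : ¬Summable fun n => lam (n + 1) :=
    mt (summable_nat_add_iff 1).1 <| not_summable_of_tendsto_inv_sub_inv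
      (eventually_atTop.2 ⟨1, fun n hn => (hlam n hn).1⟩) hslow
  refine tendsto_zero_of_le_one_sub_mul_add_mul (fun n => norm_nonneg _)
    (fun n => Set.Ioc_subset_Icc_self (hlam' n)) hsum
    ((hslow.abs.mul_const (C + ‖J 0‖)).trans_eq (by simp)) ?_
  filter_upwards [eventually_ge_atTop 1] with n hn
  rw [hw (n + 1) le_add_self, Nat.add_sub_cancel]
  calc ‖v (lam (n + 1)) - discountedMap J (lam (n + 1)) (w n)‖
      ≤ (1 - lam (n + 1)) * ‖v (lam n) - w n‖ + ‖v (lam (n + 1)) - v (lam n)‖ :=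
        norm_sub_apply_le_of_isFixedPt (norm_discountedMap_sub_le hJ (hlam' n))
          (Set.Ioc_subset_Icc_self (hlam' n)) (hvn _ le_add_self) _ _
    _ ≤ _ := by
        gcongr
        exact norm_sub_le_of_isFixedPt_discountedMap hJ hH (hlam' n) (hlam n hn)
          (hvn _ le_add_self) (hvn n hn)

/-- under hypothesis (H), if `(λ_n)` is a sequence in `(0,1]` with
`λ_n → 0` and `1/λ_n - 1/λ_{n+1} → 0`, then the discrete scheme
`w_n = Φ(λ_n, w_{n-1})` (with `Φ(λ,x) = λ J(((1-λ)/λ)x)` and fixed points `v_λ`)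
satisfies `‖v_{λ_n} - w_n‖ → 0`. -/
theorem discrete_slow_scheme_tracks_vlambda
    {X : Type*} [NormedAddCommGroup X] [NormedSpace ℝ X] [CompleteSpace X]
    (J : X → X) (hJ : ∀ x y : X, ‖J x - J y‖ ≤ ‖x - y‖)
    (v : ℝ → X)
    (hv : ∀ lam ∈ Set.Ioc (0 : ℝ) 1,
      lam • J (((1 - lam) / lam) • v lam) = v lam)
    (C : ℝ) (hC : 0 ≤ C)
    (hH : ∀ (x : X), ∀ lam ∈ Set.Ioc (0 : ℝ) 1, ∀ mu ∈ Set.Ioc (0 : ℝ) 1,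
      ‖lam • J (((1 - lam) / lam) • x) - mu • J (((1 - mu) / mu) • x)‖ ≤
        |lam - mu| * (C + ‖x‖))
    (lam : ℕ → ℝ)
    (hlam : ∀ n : ℕ, 1 ≤ n → lam n ∈ Set.Ioc (0 : ℝ) 1)
    (hlam0 : Tendsto (fun n : ℕ => lam n) atTop (nhds 0))
    (hslow : Tendsto (fun n : ℕ => 1 / lam n - 1 / lam (n + 1)) atTop (nhds 0))
    (w : ℕ → X)
    (hw : ∀ n : ℕ, 1 ≤ n →
      w n = lam n • J (((1 - lam n) / lam n) • w (n - 1))) :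
    Tendsto (fun n : ℕ => ‖v (lam n) - w n‖) atTop (nhds 0) :=
  discrete_slow_scheme_tracks_vlambda_general J hJ v hv C hH lam hlam hslow w hw
end
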